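/- Let ρ_0, ρ_1, ... : ℝ → ℝ be measurable weight functions such that z ↦ z^i ρ_j(z) is Lebesgue integrable for all i, j ≥ 0, set μ_{ij} = ∫_ℝ z^i ρ_j(z) dz, and assume D_k = det(μ_{ij})_{0≤i,j≤k−1} ≠ 0 for all k ≥ 1, so that for every n the monic determinantal polynomial p_n of degree n is defined. Fix an integer m ≥ 1. Then the following are equivalent: (a) for every n ≥ 0 there exist real coefficients A_{n,r}, max(n−m, 0) ≤ r ≤ n+m, such that z^m p_n(z) = Σ_{r=max(n−m,0)}^{n+m} A_{n,r} p_r(z) as polynomials (i.e., z^m p = L^m p with L^m a 2m+1-band matrix); (b) for all integers j ≥ 0 and ℓ ≥ 0 there exist constants c_0, ..., c_{m+j+ℓ} ∈ ℝ (depending on j and ℓ) such that ∫_ℝ u^{i+m} ρ_j(u) du = Σ_{r=0}^{m+j+ℓ} c_r ∫_ℝ u^i ρ_r(u) du for all 0 ≤ i ≤ m+j+ℓ+1. -/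
import Mathlib


open MeasureTheory Polynomial

/-- The `n × n` moment matrix `(μ i j) = (∫ z^i ρ j z dz)` of a sequence of
weights `ρ 0, ρ 1, ...` on `ℝ`. -/
noncomputable def momentMatrix (ρ : ℕ → ℝ → ℝ) (n : ℕ) : Matrix (Fin n) (Fin n) ℝ :=
  Matrix.of fun i j : Fin n => ∫ z : ℝ, z ^ (i : ℕ) * ρ (j : ℕ) z

/-- The monic determinantal polynomial `p n` of degree `n`: `Dₙ⁻¹` times the
determinant of the bordered `(n+1) × (n+1)` moment matrix whose last column
is `(X^i)`, where `Dₙ = det (μ i j)`. -/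
noncomputable def detPoly (ρ : ℕ → ℝ → ℝ) (n : ℕ) : Polynomial ℝ :=
  C (momentMatrix ρ n).det⁻¹ *
    Matrix.det (Matrix.of fun i j : Fin (n + 1) =>
      if (j : ℕ) < n then C (∫ z : ℝ, z ^ (i : ℕ) * ρ (j : ℕ) z)
      else X ^ (i : ℕ))

namespace BandAux

variable (μ : ℕ → ℕ → ℝ)

/-- bordered real matrix with last column `v`. -/
noncomputable def Bmat (n : ℕ) (v : ℕ → ℝ) : Matrix (Fin (n+1)) (Fin (n+1)) ℝ :=
  Matrix.of fun i j => if (j : ℕ) < n then μ i j else v i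

/-- bordered polynomial matrix with last column `X^i`. -/
noncomputable def polyB (n : ℕ) : Matrix (Fin (n+1)) (Fin (n+1)) (Polynomial ℝ) :=
  Matrix.of fun i j => if (j : ℕ) < n then C (μ i j) else X ^ (i : ℕ)

/-- cofactor of row `i` against the last column. -/
noncomputable def cof (n : ℕ) (i : Fin (n+1)) : ℝ :=
  Matrix.det (Matrix.of fun i' j' : Fin n => μ ((i.succAbove i' : Fin (n+1)) : ℕ) (j' : ℕ))

theorem polyB_det (n : ℕ) :
    (polyB μ n).det = ∑ i : Fin (n+1), C ((-1) ^ ((i : ℕ) + n) * cof μ n i) * X ^ (i : ℕ) := by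
  rw [Matrix.det_succ_column (polyB μ n) (Fin.last n)]
  refine Finset.sum_congr rfl fun i _ => ?_
  have h1 : polyB μ n i (Fin.last n) = X ^ (i : ℕ) := by
    simp [polyB, Matrix.of_apply, Fin.val_last]
  have h2 : ((polyB μ n).submatrix i.succAbove (Fin.last n).succAbove)
      = (C : ℝ →+* Polynomial ℝ).mapMatrix
        (Matrix.of fun i' j' : Fin n => μ ((i.succAbove i' : Fin (n+1)) : ℕ) (j' : ℕ)) := by
    ext i' j'
    simp only [Matrix.submatrix_apply, polyB, Matrix.of_apply, RingHom.mapMatrix_apply,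
      Matrix.map_apply, Fin.succAbove_last]
    rw [if_pos]
    · simp
    · simpa using j'.isLt
  rw [h1, h2, ← RingHom.map_det]
  have h3 : ((-1 : Polynomial ℝ)) ^ ((i : ℕ) + (Fin.last n : ℕ)) = C ((-1 : ℝ) ^ ((i : ℕ) + n)) := by
    simp [Fin.val_last]
  rw [h3, C_mul]
  unfold cof
  ring

theorem Bmat_det (n : ℕ) (v : ℕ → ℝ) :
    (Bmat μ n v).det = ∑ i : Fin (n+1), ((-1) ^ ((i : ℕ) + n) * cof μ n i) * v (i : ℕ) := by
  rw [Matrix.det_succ_column (Bmat μ n v) (Fin.last n)]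
  refine Finset.sum_congr rfl fun i _ => ?_
  have h1 : Bmat μ n v i (Fin.last n) = v (i : ℕ) := by
    simp [Bmat, Matrix.of_apply, Fin.val_last]
  have h2 : ((Bmat μ n v).submatrix i.succAbove (Fin.last n).succAbove)
      = Matrix.of fun i' j' : Fin n => μ ((i.succAbove i' : Fin (n+1)) : ℕ) (j' : ℕ) := by
    ext i' j'
    simp only [Matrix.submatrix_apply, Bmat, Matrix.of_apply, Fin.succAbove_last]
    rw [if_pos]
    · rfl
    · simpa using j'.isLt
  rw [h1, h2]
  simp [cof, Fin.val_last]
  ring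



/-- the linear functional `q ↦ ∑ i, q.coeff i * v i`. -/
noncomputable def Lmap (v : ℕ → ℝ) : Polynomial ℝ →ₗ[ℝ] ℝ :=
  Polynomial.lsum fun i => LinearMap.toSpanSingleton ℝ ℝ (v i)

theorem Lmap_monomial (v : ℕ → ℝ) (i : ℕ) (a : ℝ) :
    Lmap v (monomial i a) = a * v i := by
  simp [Lmap, Polynomial.lsum_apply, Polynomial.sum_monomial_index,
    LinearMap.toSpanSingleton_apply, smul_eq_mul]

theorem Lmap_C_mul_X_pow (v : ℕ → ℝ) (i : ℕ) (a : ℝ) :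
    Lmap v (C a * X ^ i) = a * v i := by
  rw [C_mul_X_pow_eq_monomial, Lmap_monomial]

theorem Lmap_X_pow_mul (v : ℕ → ℝ) (m : ℕ) (q : Polynomial ℝ) :
    Lmap v (X ^ m * q) = Lmap (fun i => v (i + m)) q := by
  induction q using Polynomial.induction_on' with
  | add p q hp hq => rw [mul_add, map_add, map_add, hp, hq]
  | monomial i a =>
      rw [Lmap_monomial]
      have : X ^ m * monomial i a = monomial (i + m) a := by
        rw [mul_comm, monomial_mul_X_pow]
      rw [this, Lmap_monomial]

theorem Lmap_smul' (v : ℕ → ℝ) (c : ℝ) (q : Polynomial ℝ) :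
    Lmap v (C c * q) = c * Lmap v q := by
  rw [← smul_eq_C_mul, _root_.map_smul, smul_eq_mul]

theorem Lmap_polyB_det (n : ℕ) (v : ℕ → ℝ) :
    Lmap v (polyB μ n).det = (Bmat μ n v).det := by
  rw [polyB_det, Bmat_det, map_sum]
  exact Finset.sum_congr rfl fun i _ => Lmap_C_mul_X_pow v _ _

theorem polyB_det_coeff_top (n : ℕ) :
    (polyB μ n).det.coeff n = Matrix.det (Matrix.of fun i j : Fin n => μ (i : ℕ) (j : ℕ)) := by
  rw [polyB_det, Polynomial.finset_sum_coeff]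
  rw [Finset.sum_eq_single (Fin.last n)]
  · simp only [coeff_C_mul, coeff_X_pow, Fin.val_last, if_pos rfl, mul_one]
    have : cof μ n (Fin.last n)
        = Matrix.det (Matrix.of fun i j : Fin n => μ (i : ℕ) (j : ℕ)) := by
      unfold cof
      congr 1
      ext i' j'
      rw [Fin.succAbove_last]
      simp
    rw [this]
    simp
  · intro b _ hb
    have : n ≠ (b : ℕ) := by
      intro h
      exact hb (Fin.ext (by simp [← h]))
    rw [coeff_C_mul, coeff_X_pow, if_neg this, mul_zero]
  · simp

theorem polyB_det_natDegree_le (n : ℕ) : (polyB μ n).det.natDegree ≤ n := by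
  rw [polyB_det]
  refine Polynomial.natDegree_sum_le_of_forall_le _ _ fun i _ => ?_
  refine le_trans (Polynomial.natDegree_mul_le) ?_
  simp only [Polynomial.natDegree_C, Polynomial.natDegree_X_pow, zero_add]
  exact Nat.le_of_lt_succ i.isLt


theorem det_Bmat_eq_zero_iff (n : ℕ)
    (hDn : Matrix.det (Matrix.of fun i j : Fin n => μ (i : ℕ) (j : ℕ)) ≠ 0) (v : ℕ → ℝ) :
    (Bmat μ n v).det = 0 ↔
      ∃ c : ℕ → ℝ, ∀ i ≤ n, v i = ∑ r ∈ Finset.range n, c r * μ i r := by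
  have hrow : ∀ w : Fin (n+1) → ℝ, (Bmat μ n v).mulVec w = 0 →
      ∀ i : Fin (n+1),
        (∑ j : Fin n, μ (i : ℕ) (j : ℕ) * w j.castSucc) + v (i : ℕ) * w (Fin.last n) = 0 := by
    intro w hw i
    have h := congrFun hw i
    rw [Pi.zero_apply] at h
    rw [Matrix.mulVec, dotProduct, Fin.sum_univ_castSucc] at h
    have e1 : ∀ j : Fin n, Bmat μ n v i j.castSucc = μ (i : ℕ) (j : ℕ) := by
      intro j
      simp only [Bmat, Matrix.of_apply]
      rw [if_pos]
      · rfl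
      · simpa using j.isLt
    have e2 : Bmat μ n v i (Fin.last n) = v (i : ℕ) := by
      simp [Bmat, Matrix.of_apply]
    rw [e2] at h
    rw [← h]
    congr 1
    exact Finset.sum_congr rfl fun j _ => by rw [e1 j]
  constructor
  · intro hdet
    obtain ⟨w, hw0, hwv⟩ := Matrix.exists_mulVec_eq_zero_iff.mpr hdet
    have hrw := hrow w hwv
    by_cases hwl : w (Fin.last n) = 0
    · exfalso
      set u : Fin n → ℝ := fun j => w j.castSucc with hu_def
      have hu : (Matrix.of fun i j : Fin n => μ (i : ℕ) (j : ℕ)).mulVec u = 0 := by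
        funext i'
        have h := hrw i'.castSucc
        rw [hwl, mul_zero, add_zero] at h
        rw [Matrix.mulVec, dotProduct]
        simpa using h
      have hu0 : u = 0 := by
        by_contra h
        exact hDn (Matrix.exists_mulVec_eq_zero_iff.mp ⟨u, h, hu⟩)
      apply hw0
      funext j
      refine Fin.lastCases ?_ ?_ j
      · exact hwl
      · intro j'
        exact congrFun hu0 j'
    · refine ⟨fun r => if h : r < n then -w (Fin.castSucc ⟨r, h⟩) / w (Fin.last n) else 0,
        fun i hi => ?_⟩
      set wl := w (Fin.last n)
      have hsum : (∑ r ∈ Finset.range n,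
            (if h : r < n then -w (Fin.castSucc ⟨r, h⟩) / wl else 0) * μ i r)
          = (∑ j : Fin n, -(μ i (j : ℕ) * w j.castSucc)) / wl := by
        rw [← Fin.sum_univ_eq_sum_range, Finset.sum_div]
        refine Finset.sum_congr rfl fun j _ => ?_
        rw [dif_pos j.isLt]
        have : (⟨(j : ℕ), j.isLt⟩ : Fin n) = j := rfl
        rw [this]
        ring
      rw [hsum, eq_div_iff hwl]
      have h := hrw ⟨i, by omega⟩
      simp only [Finset.sum_neg_distrib]
      push_cast at h ⊢
      linarith [h]
  · rintro ⟨c, hc⟩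
    rw [← Matrix.exists_mulVec_eq_zero_iff]
    refine ⟨fun j => if h : (j : ℕ) < n then c j else -1, ?_, ?_⟩
    · intro h
      have := congrFun h (Fin.last n)
      simp at this
    · funext i
      have h := hrow (fun j => if h : (j : ℕ) < n then c j else -1)
      -- can't use hrow since it assumes mulVec = 0; compute directly instead
      rw [Matrix.mulVec, dotProduct, Fin.sum_univ_castSucc]
      have e2 : Bmat μ n v i (Fin.last n) = v (i : ℕ) := by
        simp [Bmat, Matrix.of_apply]
      rw [e2]
      rw [dif_neg (by simp)]
      have e3 : (∑ j : Fin n, Bmat μ n v i j.castSucc *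
            (if h : ((j.castSucc : Fin (n+1)) : ℕ) < n then c j.castSucc else -1))
          = ∑ r ∈ Finset.range n, c r * μ i r := by
        rw [← Fin.sum_univ_eq_sum_range]
        refine Finset.sum_congr rfl fun j _ => ?_
        have hj : ((j.castSucc : Fin (n+1)) : ℕ) < n := by simpa using j.isLt
        rw [dif_pos hj]
        simp only [Bmat, Matrix.of_apply]
        rw [if_pos hj]
        simp [mul_comm]
      rw [e3, ← hc i (by omega)]
      simp only [Pi.zero_apply]
      ring

end BandAux

open BandAux

/-- the moment sequence of the weights. -/
noncomputable def mom (ρ : ℕ → ℝ → ℝ) : ℕ → ℕ → ℝ := fun i j => ∫ z : ℝ, z ^ i * ρ j z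

theorem detPoly_eq (ρ : ℕ → ℝ → ℝ) (n : ℕ) :
    detPoly ρ n = C (momentMatrix ρ n).det⁻¹ * (polyB (mom ρ) n).det := rfl

theorem momentMatrix_eq (ρ : ℕ → ℝ → ℝ) (n : ℕ) :
    momentMatrix ρ n = Matrix.of fun i j : Fin n => mom ρ (i : ℕ) (j : ℕ) := rfl

theorem coeff_detPoly (ρ : ℕ → ℝ → ℝ) (n : ℕ) (h : (momentMatrix ρ n).det ≠ 0) :
    (detPoly ρ n).coeff n = 1 := by
  rw [detPoly_eq, coeff_C_mul, polyB_det_coeff_top, ← momentMatrix_eq, inv_mul_cancel₀ h]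

theorem natDegree_detPoly_le (ρ : ℕ → ℝ → ℝ) (n : ℕ) : (detPoly ρ n).natDegree ≤ n := by
  rw [detPoly_eq]
  exact (Polynomial.natDegree_C_mul_le _ _).trans (polyB_det_natDegree_le _ n)

theorem Lmap_detPoly (ρ : ℕ → ℝ → ℝ) (n : ℕ) (v : ℕ → ℝ) :
    Lmap v (detPoly ρ n) = (momentMatrix ρ n).det⁻¹ * (Bmat (mom ρ) n v).det := by
  rw [detPoly_eq, Lmap_smul', Lmap_polyB_det]

theorem Lmap_detPoly_orth (ρ : ℕ → ℝ → ℝ) {j n : ℕ} (hjn : j < n) :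
    Lmap (fun i => mom ρ i j) (detPoly ρ n) = 0 := by
  rw [Lmap_detPoly]
  have h0 : (Bmat (mom ρ) n (fun i => mom ρ i j)).det = 0 := by
    refine Matrix.det_zero_of_column_eq
      (i := (⟨j, by omega⟩ : Fin (n+1))) (j := Fin.last n) ?_ ?_
    · intro h
      have := congrArg Fin.val h
      simp only [Fin.val_last] at this
      omega
    · intro k
      simp only [Bmat, Matrix.of_apply]
      rw [if_pos (by simpa using hjn), if_neg (by simp)]
  rw [h0, mul_zero]

theorem Lmap_detPoly_self (ρ : ℕ → ℝ → ℝ) (n : ℕ) (h1 : (momentMatrix ρ n).det ≠ 0)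
    (h2 : (momentMatrix ρ (n+1)).det ≠ 0) :
    Lmap (fun i => mom ρ i n) (detPoly ρ n) ≠ 0 := by
  rw [Lmap_detPoly]
  have hB : Bmat (mom ρ) n (fun i => mom ρ i n)
      = Matrix.of fun i j : Fin (n+1) => mom ρ (i : ℕ) (j : ℕ) := by
    ext i jj
    simp only [Bmat, Matrix.of_apply]
    by_cases h : (jj : ℕ) < n
    · rw [if_pos h]
    · rw [if_neg h]
      have hlt := jj.isLt
      have : (jj : ℕ) = n := by omega
      rw [this]
  rw [hB, ← momentMatrix_eq]
  exact mul_ne_zero (inv_ne_zero h1) h2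

theorem exists_expansion (ρ : ℕ → ℝ → ℝ) (hD' : ∀ k, (momentMatrix ρ k).det ≠ 0) :
    ∀ N (q : Polynomial ℝ), q.natDegree ≤ N →
      ∃ B : ℕ → ℝ, q = ∑ r ∈ Finset.range (N+1), C (B r) * detPoly ρ r := by
  intro N
  induction N with
  | zero =>
      intro q hq
      refine ⟨fun _ => q.coeff 0, ?_⟩
      have hP0 : detPoly ρ 0 = 1 := by
        have h1 := Polynomial.eq_C_of_natDegree_le_zero (natDegree_detPoly_le ρ 0)
        rw [h1, coeff_detPoly ρ 0 (hD' 0), map_one]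
      rw [Polynomial.eq_C_of_natDegree_le_zero hq]
      simp [hP0]
  | succ N ih =>
      intro q hq
      set q' := q - C (q.coeff (N+1)) * detPoly ρ (N+1) with hq'
      have hd : q'.natDegree ≤ N := by
        rw [Polynomial.natDegree_le_iff_coeff_eq_zero]
        intro k hk
        rcases Nat.lt_or_ge (N+1) k with h | h
        · rw [hq', Polynomial.coeff_sub, Polynomial.coeff_C_mul,
            Polynomial.coeff_eq_zero_of_natDegree_lt (lt_of_le_of_lt hq h),
            Polynomial.coeff_eq_zero_of_natDegree_lt
              (lt_of_le_of_lt (natDegree_detPoly_le ρ (N+1)) h),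
            mul_zero, sub_zero]
        · have hk1 : k = N + 1 := by omega
          rw [hq', hk1, Polynomial.coeff_sub, Polynomial.coeff_C_mul,
            coeff_detPoly ρ (N+1) (hD' (N+1)), mul_one, sub_self]
      obtain ⟨B', hB'⟩ := ih q' hd
      refine ⟨fun r => if r = N+1 then q.coeff (N+1) else B' r, ?_⟩
      rw [Finset.sum_range_succ]
      have hcong : ∑ r ∈ Finset.range (N+1),
            C (if r = N+1 then q.coeff (N+1) else B' r) * detPoly ρ r
          = ∑ r ∈ Finset.range (N+1), C (B' r) * detPoly ρ r := by
        refine Finset.sum_congr rfl fun r hr => ?_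
        rw [if_neg (by have := Finset.mem_range.mp hr; omega)]
      rw [hcong, ← hB']
      show q = q' + C (if N + 1 = N + 1 then q.coeff (N+1) else B' (N+1)) * detPoly ρ (N+1)
      rw [if_pos rfl, hq']
      ring


/-- band-matrix criterion: with weights `ρ 0, ρ 1, ...` having all
moments integrable and all moment determinants nonzero, and `m ≥ 1`, the following
are equivalent:
(a) for every `n` the polynomial `X^m * p n` is a linear combination of the
`p r` with `max (n-m) 0 ≤ r ≤ n+m` (i.e. `z^m p = L^m p` with `L^m` a
`2m+1`-band matrix);
(b) for all `j, ℓ ≥ 0` there are constants `c 0, ..., c (m+j+ℓ)` with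
`∫ u^{i+m} ρ j u du = ∑_{r=0}^{m+j+ℓ} c r ∫ u^i ρ r u du` for all
`0 ≤ i ≤ m+j+ℓ+1`. -/
theorem band_matrix_criterion
    (ρ : ℕ → ℝ → ℝ) (hmeas : ∀ j, Measurable (ρ j))
    (hint : ∀ i j : ℕ, Integrable (fun z : ℝ => z ^ i * ρ j z))
    (hD : ∀ k : ℕ, 1 ≤ k → (momentMatrix ρ k).det ≠ 0)
    (m : ℕ) (hm : 1 ≤ m) :
    (∀ n : ℕ, ∃ A : ℕ → ℝ,
        X ^ m * detPoly ρ n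
          = ∑ r ∈ Finset.Icc (n - m) (n + m), C (A r) * detPoly ρ r)
      ↔
    (∀ j ℓ : ℕ, ∃ c : ℕ → ℝ, ∀ i : ℕ, i ≤ m + j + ℓ + 1 →
        (∫ u : ℝ, u ^ (i + m) * ρ j u)
          = ∑ r ∈ Finset.range (m + j + ℓ + 1), c r * ∫ u : ℝ, u ^ i * ρ r u) := by
  have hD' : ∀ k, (momentMatrix ρ k).det ≠ 0 := by
    intro k
    cases k with
    | zero => simp [Matrix.det_fin_zero]
    | succ k => exact hD _ (Nat.succ_le_succ (Nat.zero_le _))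
  constructor
  · intro ha j ℓ
    set n := m + j + ℓ + 1 with hn
    obtain ⟨A, hA⟩ := ha n
    have h0 : Lmap (fun i => mom ρ i j) (X ^ m * detPoly ρ n) = 0 := by
      rw [hA, map_sum]
      refine Finset.sum_eq_zero fun r hr => ?_
      have hrge : n - m ≤ r := (Finset.mem_Icc.mp hr).1
      have hjr : j < r := by omega
      rw [Lmap_smul', Lmap_detPoly_orth ρ hjr, mul_zero]
    rw [Lmap_X_pow_mul, Lmap_detPoly] at h0
    have hdet : (Bmat (mom ρ) n (fun i => mom ρ (i + m) j)).det = 0 := by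
      rcases mul_eq_zero.mp h0 with h | h
      · exact absurd h (inv_ne_zero (hD' n))
      · exact h
    have hDn : Matrix.det (Matrix.of fun i j : Fin n => mom ρ (i : ℕ) (j : ℕ)) ≠ 0 := by
      rw [← momentMatrix_eq]; exact hD' n
    obtain ⟨c, hc⟩ := (det_Bmat_eq_zero_iff (mom ρ) n hDn _).mp hdet
    exact ⟨c, fun i hi => hc i (by omega)⟩
  · intro hb n
    have hdeg : (X ^ m * detPoly ρ n).natDegree ≤ n + m := by
      refine le_trans Polynomial.natDegree_mul_le ?_
      have h1 := natDegree_detPoly_le ρ n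
      have h2 : (X ^ m : Polynomial ℝ).natDegree = m := Polynomial.natDegree_X_pow m
      omega
    obtain ⟨B, hB⟩ := exists_expansion ρ hD' (n + m) _ hdeg
    have horthL : ∀ j, j + m < n →
        Lmap (fun i => mom ρ i j) (X ^ m * detPoly ρ n) = 0 := by
      intro j hj
      obtain ⟨c, hc⟩ := hb j (n - m - j - 1)
      have hn : m + j + (n - m - j - 1) + 1 = n := by omega
      have hdet : (Bmat (mom ρ) n (fun i => mom ρ (i + m) j)).det = 0 := by
        refine (det_Bmat_eq_zero_iff (mom ρ) n
          (by rw [← momentMatrix_eq]; exact hD' n) _).mpr ⟨c, fun i hi => ?_⟩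
        have h := hc i (by omega)
        rw [hn] at h
        exact h
      rw [Lmap_X_pow_mul, Lmap_detPoly, hdet, mul_zero]
    have hzero : ∀ j, j < n - m → B j = 0 := by
      intro j
      induction j using Nat.strong_induction_on with
      | _ j ih =>
        intro hj
        have h1 := horthL j (by omega)
        rw [hB, map_sum] at h1
        have h2 : ∑ r ∈ Finset.range (n + m + 1),
              Lmap (fun i => mom ρ i j) (C (B r) * detPoly ρ r)
            = B j * Lmap (fun i => mom ρ i j) (detPoly ρ j) := by
          rw [Finset.sum_eq_single j]
          · rw [Lmap_smul']
          · intro r hr hne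
            rcases lt_or_gt_of_ne hne with h | h
            · rw [Lmap_smul', ih r h (by omega), zero_mul]
            · rw [Lmap_smul', Lmap_detPoly_orth ρ h, mul_zero]
          · intro hnotin
            exact absurd (Finset.mem_range.mpr (by omega)) hnotin
        rw [h2] at h1
        rcases mul_eq_zero.mp h1 with h | h
        · exact h
        · exact absurd h (Lmap_detPoly_self ρ j (hD' j) (hD' (j+1)))
    refine ⟨B, ?_⟩
    rw [hB]
    have hIco : Finset.Ico (n - m) (n + m + 1) = Finset.Icc (n - m) (n + m) := by
      rw [Finset.Ico_add_one_right_eq_Icc]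
    have hsplit : ∑ r ∈ Finset.range (n + m + 1), C (B r) * detPoly ρ r
        = (∑ r ∈ Finset.Ico 0 (n - m), C (B r) * detPoly ρ r)
          + ∑ r ∈ Finset.Ico (n - m) (n + m + 1), C (B r) * detPoly ρ r := by
      rw [Finset.sum_Ico_consecutive _ (Nat.zero_le _) (by omega), ← Finset.range_eq_Ico]
    rw [hsplit, hIco]
    have hz : ∑ r ∈ Finset.Ico 0 (n - m), C (B r) * detPoly ρ r = 0 := by
      refine Finset.sum_eq_zero fun r hr => ?_
      rw [hzero r (Finset.mem_Ico.mp hr).2, map_zero, zero_mul]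
    rw [hz, zero_add]
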